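/- Let p ≥ 2 and fix t with 0 < t < 2/(p-1). There exist a natural number m₀ ≥ 1 and, for each integer m ≥ m₀, a constant C > 0 depending only on p, t, m (in particular independent of Ω, f and u) with the following property: for every integer n ≥ 1, every open set Ω ⊆ ℝⁿ, every continuous f : Ω → ℝ with f ≥ 0, and every u ∈ C¹(Ω) which is a weak solution of -Δ_p u = f(x) e^u on Ω and is stable on Ω, one has, for every C¹ function φ : ℝⁿ → ℝ with compact support in Ω and 0 ≤ φ ≤ 1: ∫_Ω f e^{(2t+1)u} φ^{2m} dx ≤ C ∫_Ω f^{-2t} (|∇u|^{p-2} |∇φ|²)^{2t+1} dx, where both sides are Lebesgue integrals with values in [0,∞] (the right-hand side may be +∞ where f vanishes). -/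

import Mathlib

/-!
Test the stability inequality with `g = e^{tu} η` and the weak form of the equation with `g²`.
With `I = ∫ f e^u g²`, `J = ∫ |∇u|^p g²` and `V = ∫ |∇u|^{p-2} e^{2tu} |∇η|²`, Young's inequality
gives `I ≤ (p-1)((1+ε) t² J + (1+ε⁻¹) V)` and `(2t-δ) J ≤ I + δ⁻¹ V`. Since `(p-1) t² < 2t` exactly
when `t < 2/(p-1)`, suitable `ε, δ` eliminate `J` and leave the Caccioppoli bound `I ≤ C V`.
For `η = φ^m` the integrand of `V` is `m² |∇u|^{p-2} |∇φ|² e^{2tu} φ^{2m-2}`, and Young's inequality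
with exponents `2t+1` and `(2t+1)/(2t)` splits it into a small multiple of the integrand of `I` and
`f^{-2t} (|∇u|^{p-2} |∇φ|²)^{2t+1}`; this is where `φ ≤ 1` and `m ≥ 2t+1` enter. The small multiple
of `I` is absorbed, which is legitimate because `I` is the integral of a continuous function with
compact support.
-/

open Real MeasureTheory InnerProductSpace Function
open scoped Gradient ENNReal

theorem two_mul_le_mul_sq_add_inv_mul_sq {δ : ℝ} (hδ : 0 < δ) (a b : ℝ) :
    2 * a * b ≤ δ * a ^ 2 + δ⁻¹ * b ^ 2 := by
  have h := mul_nonneg (inv_nonneg.2 hδ.le) (sq_nonneg (δ * a - b))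
  have hδδ : δ * δ⁻¹ = 1 := mul_inv_cancel₀ hδ.ne'
  linear_combination h + (δ * a ^ 2 - 2 * a * b) * hδδ

theorem add_sq_le_one_add_mul_sq {ε : ℝ} (hε : 0 < ε) (a b : ℝ) :
    (a + b) ^ 2 ≤ (1 + ε) * a ^ 2 + (1 + ε⁻¹) * b ^ 2 := by
  linarith [two_mul_le_mul_sq_add_inv_mul_sq hε a b]

theorem le_div_mul_of_le_add_of_le_add {I J V a b c d : ℝ} (ha : 0 ≤ a) (hac : a < c)
    (hI : I ≤ a * J + b * V) (hJ : c * J ≤ I + d * V) :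
    I ≤ (a * d + b * c) / (c - a) * V := by
  rw [div_mul_eq_mul_div, le_div_iff₀ (sub_pos.2 hac)]
  nlinarith [mul_le_mul_of_nonneg_left hJ ha, mul_le_mul_of_nonneg_left hI (ha.trans hac.le)]

theorem exists_pos_mul_one_add_mul_sq_lt {a t : ℝ} (ha : 0 < a) (ht : 0 < t) (hat : a * t < 2) :
    ∃ ε δ : ℝ, 0 < ε ∧ 0 < δ ∧ a * (1 + ε) * t ^ 2 < 2 * t - δ := by
  refine ⟨(2 - a * t) / (2 * (a * t)), t * (2 - a * t) / 4, div_pos (by linarith) (by positivity),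
    by nlinarith, ?_⟩
  have : a * (1 + (2 - a * t) / (2 * (a * t))) * t ^ 2 = t * (2 + a * t) / 2 := by
    field_simp
    ring
  rw [this]
  nlinarith

section Gradient

variable {F : Type*} [NormedAddCommGroup F] [InnerProductSpace ℝ F] [CompleteSpace F]
  {g h u : F → ℝ} {g' h' x : F} {Ω : Set F}

theorem HasGradientAt.mul (hg : HasGradientAt g g' x) (hh : HasGradientAt h h' x) :
    HasGradientAt (fun y => g y * h y) (g x • h' + h x • g') x := by
  rw [hasGradientAt_iff_hasFDerivAt] at *
  exact (hg.mul hh).congr_fderiv (by simp)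

theorem HasDerivAt.comp_hasGradientAt {ρ : ℝ → ℝ} {ρ' : ℝ} (hρ : HasDerivAt ρ ρ' (g x))
    (hg : HasGradientAt g g' x) : HasGradientAt (fun y => ρ (g y)) (ρ' • g') x := by
  rw [hasGradientAt_iff_hasFDerivAt] at *
  exact (hρ.comp_hasFDerivAt x hg).congr_fderiv (by simp)

theorem HasGradientAt.pow (hg : HasGradientAt g g' x) (n : ℕ) :
    HasGradientAt (fun y => g y ^ n) ((n * g x ^ (n - 1)) • g') x :=
  (hasDerivAt_pow n (g x)).comp_hasGradientAt hg

theorem HasGradientAt.exp_mul_mul (hg : HasGradientAt g g' x) (hh : HasGradientAt h h' x)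
    (t : ℝ) : HasGradientAt (fun y => exp (t * g y) * h y)
      ((t * (exp (t * g x) * h x)) • g' + exp (t * g x) • h') x := by
  have he : HasGradientAt (fun y => exp (t * g y)) ((exp (t * g x) * t) • g') x := by
    simpa using ((hasDerivAt_id (g x)).const_mul t).exp.comp_hasGradientAt hg
  convert he.mul hh using 1
  rw [smul_smul, add_comm]
  ring_nf

theorem gradient_eq_zero_of_notMem_tsupport (hx : x ∉ tsupport g) : ∇ g x = 0 := by
  simp [gradient, fderiv_of_notMem_tsupport (𝕜 := ℝ) hx]

theorem ContDiffOn.continuousOn_gradient (hu : ContDiffOn ℝ 1 u Ω) (hΩ : IsOpen Ω) :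
    ContinuousOn (∇ u) Ω :=
  (toDual ℝ F).symm.continuous.comp_continuousOn (hu.continuousOn_fderiv_of_isOpen hΩ le_rfl)

theorem ContDiff.continuous_gradient (hu : ContDiff ℝ 1 u) : Continuous (∇ u) :=
  continuousOn_univ.1 (hu.contDiffOn.continuousOn_gradient isOpen_univ)

theorem ContDiffOn.continuousOn_norm_gradient_rpow (hu : ContDiffOn ℝ 1 u Ω) (hΩ : IsOpen Ω)
    {q : ℝ} (hq : 0 ≤ q) : ContinuousOn (fun x => ‖∇ u x‖ ^ q) Ω :=
  (hu.continuousOn_gradient hΩ).norm.rpow_const fun _ _ => Or.inr hq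

theorem hasGradientAt_exp_mul_mul (hΩ : IsOpen Ω) (hu : ContDiffOn ℝ 1 u Ω)
    (hh : ContDiff ℝ 1 h) (t : ℝ) (hx : x ∈ Ω) :
    HasGradientAt (fun y => exp (t * u y) * h y)
      ((t * (exp (t * u x) * h x)) • ∇ u x + exp (t * u x) • ∇ h x) x :=
  ((hu.contDiffAt (hΩ.mem_nhds hx)).differentiableAt one_ne_zero).hasGradientAt.exp_mul_mul
    ((hh.differentiable one_ne_zero) x).hasGradientAt t

end Gradient

section TestFunction

variable {F : Type*} [NormedAddCommGroup F] [NormedSpace ℝ F] {Ω : Set F} {η : F → ℝ}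

def IsTestFunction (Ω : Set F) (η : F → ℝ) : Prop :=
  ContDiff ℝ 1 η ∧ HasCompactSupport η ∧ tsupport η ⊆ Ω

theorem ContDiffOn.mul_contDiff_of_tsupport_subset {n : WithTop ℕ∞} {g : F → ℝ}
    (hg : ContDiffOn ℝ n g Ω) (hΩ : IsOpen Ω) (hη : ContDiff ℝ n η) (hηΩ : tsupport η ⊆ Ω) :
    ContDiff ℝ n (fun x => g x * η x) := by
  refine contDiff_iff_contDiffAt.2 fun x => ?_
  by_cases hx : x ∈ Ω
  · exact (hg.contDiffAt (hΩ.mem_nhds hx)).mul hη.contDiffAt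
  · have hη0 : η =ᶠ[nhds x] 0 := notMem_tsupport_iff_eventuallyEq.1 fun h => hx (hηΩ h)
    exact (contDiffAt_const (c := 0)).congr_of_eventuallyEq (hη0.mono fun y hy => by simp [hy])

theorem IsTestFunction.mul_left (hη : IsTestFunction Ω η) {g : F → ℝ}
    (hg : ContDiffOn ℝ 1 g Ω) (hΩ : IsOpen Ω) : IsTestFunction Ω (fun x => g x * η x) :=
  ⟨hg.mul_contDiff_of_tsupport_subset hΩ hη.1 hη.2.2,
    hη.2.1.mono' ((support_mul_subset_right _ _).trans (subset_tsupport η)),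
    tsupport_mul_subset_right.trans hη.2.2⟩

theorem IsTestFunction.pow (hη : IsTestFunction Ω η) {k : ℕ} (hk : k ≠ 0) :
    IsTestFunction Ω (fun x => η x ^ k) := by
  have hs : tsupport (fun x => η x ^ k) = tsupport η := by
    rw [tsupport, support_pow η hk, tsupport]
  exact ⟨hη.1.pow k, by rw [HasCompactSupport, hs]; exact hη.2.1, hs ▸ hη.2.2⟩

theorem IsTestFunction.integrableOn [MeasurableSpace F] [OpensMeasurableSpace F]
    {μ : Measure F} [IsFiniteMeasureOnCompacts μ] (hη : IsTestFunction Ω η)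
    (hΩ : MeasurableSet Ω) {G : F → ℝ} (hG : ContinuousOn G Ω) (hGη : support G ⊆ tsupport η) :
    IntegrableOn G Ω μ :=
  ((hG.mono hη.2.2).integrableOn_compact hη.2.1).of_forall_sdiff_eq_zero hΩ
    fun _ hx => notMem_support.1 fun h => hx.2 (hGη h)

end TestFunction

section Gelfand

variable {F : Type*} [NormedAddCommGroup F] [InnerProductSpace ℝ F] [CompleteSpace F]
  [MeasurableSpace F]

def IsGelfandWeakSolution (p : ℝ) (μ : Measure F) (Ω : Set F) (f u : F → ℝ) : Prop :=
  ∀ φ, IsTestFunction Ω φ →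
    ∫ x in Ω, ‖∇ u x‖ ^ (p - 2) * ⟪∇ u x, ∇ φ x⟫_ℝ ∂μ = ∫ x in Ω, f x * exp (u x) * φ x ∂μ

def IsGelfandStable (p : ℝ) (μ : Measure F) (Ω : Set F) (f u : F → ℝ) : Prop :=
  ∀ φ, IsTestFunction Ω φ →
    ∫ x in Ω, f x * exp (u x) * φ x ^ 2 ∂μ ≤
      (p - 1) * ∫ x in Ω, ‖∇ u x‖ ^ (p - 2) * ‖∇ φ x‖ ^ 2 ∂μ

variable [OpensMeasurableSpace F] {μ : Measure F} {Ω : Set F} {f u η : F → ℝ} {p t : ℝ}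

theorem IsGelfandStable.integral_le (hstab : IsGelfandStable p μ Ω f u) (hp : 1 ≤ p)
    (hΩ : IsOpen Ω) (hu : ContDiffOn ℝ 1 u Ω) (hη : IsTestFunction Ω η) {ε : ℝ} (hε : 0 < ε)
    (hJ : IntegrableOn
      (fun x => ‖∇ u x‖ ^ (p - 2) * (‖∇ u x‖ * (exp (t * u x) * η x)) ^ 2) Ω μ)
    (hV : IntegrableOn (fun x => ‖∇ u x‖ ^ (p - 2) * (exp (t * u x) * ‖∇ η x‖) ^ 2) Ω μ) :
    ∫ x in Ω, f x * exp (u x) * (exp (t * u x) * η x) ^ 2 ∂μ ≤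
      (p - 1) * ((1 + ε) * t ^ 2 *
          ∫ x in Ω, ‖∇ u x‖ ^ (p - 2) * (‖∇ u x‖ * (exp (t * u x) * η x)) ^ 2 ∂μ +
        (1 + ε⁻¹) * ∫ x in Ω, ‖∇ u x‖ ^ (p - 2) * (exp (t * u x) * ‖∇ η x‖) ^ 2 ∂μ) := by
  refine (hstab _ (hη.mul_left (contDiffOn_const.mul hu).exp hΩ)).trans
    (mul_le_mul_of_nonneg_left ?_ (sub_nonneg.2 hp))
  rw [← integral_const_mul, ← integral_const_mul,
    ← integral_add (hJ.const_mul _) (hV.const_mul _)]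
  refine integral_mono_of_nonneg (ae_of_all _ fun x => by positivity)
    ((hJ.const_mul _).add (hV.const_mul _)) ?_
  filter_upwards [ae_restrict_mem hΩ.measurableSet] with x hx
  rw [(hasGradientAt_exp_mul_mul hΩ hu hη.1 t hx).gradient]
  set g := exp (t * u x) * η x
  have hnorm : ‖(t * g) • ∇ u x + exp (t * u x) • ∇ η x‖ ≤
      |t * g| * ‖∇ u x‖ + exp (t * u x) * ‖∇ η x‖ := by
    refine (norm_add_le _ _).trans_eq ?_
    rw [norm_smul, norm_smul, Real.norm_eq_abs, Real.norm_of_nonneg (exp_pos _).le]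
  calc ‖∇ u x‖ ^ (p - 2) * ‖(t * g) • ∇ u x + exp (t * u x) • ∇ η x‖ ^ 2
      ≤ ‖∇ u x‖ ^ (p - 2) * ((1 + ε) * (|t * g| * ‖∇ u x‖) ^ 2 +
          (1 + ε⁻¹) * (exp (t * u x) * ‖∇ η x‖) ^ 2) :=
        mul_le_mul_of_nonneg_left ((pow_le_pow_left₀ (norm_nonneg _) hnorm 2).trans
          (add_sq_le_one_add_mul_sq hε _ _)) (by positivity)
    _ = _ := by
        rw [mul_pow |t * g|, sq_abs]
        ring

variable [IsFiniteMeasureOnCompacts μ]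

theorem IsGelfandWeakSolution.le_integral (hweak : IsGelfandWeakSolution p μ Ω f u)
    (hp : 2 ≤ p) (hΩ : IsOpen Ω) (hu : ContDiffOn ℝ 1 u Ω) (hη : IsTestFunction Ω η) {δ : ℝ}
    (hδ : 0 < δ)
    (hJ : IntegrableOn
      (fun x => ‖∇ u x‖ ^ (p - 2) * (‖∇ u x‖ * (exp (t * u x) * η x)) ^ 2) Ω μ)
    (hV : IntegrableOn (fun x => ‖∇ u x‖ ^ (p - 2) * (exp (t * u x) * ‖∇ η x‖) ^ 2) Ω μ) :
    (2 * t - δ) * ∫ x in Ω, ‖∇ u x‖ ^ (p - 2) * (‖∇ u x‖ * (exp (t * u x) * η x)) ^ 2 ∂μ -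
        δ⁻¹ * ∫ x in Ω, ‖∇ u x‖ ^ (p - 2) * (exp (t * u x) * ‖∇ η x‖) ^ 2 ∂μ ≤
      ∫ x in Ω, f x * exp (u x) * (exp (t * u x) * η x) ^ 2 ∂μ := by
  have hg2 := (hη.mul_left ((contDiffOn_const (c := t)).mul hu).exp hΩ).pow two_ne_zero
  rw [← hweak _ hg2, ← integral_const_mul, ← integral_const_mul,
    ← integral_sub (hJ.const_mul _) (hV.const_mul _)]
  refine setIntegral_mono_on ((hJ.const_mul _).sub (hV.const_mul _))
    (hg2.integrableOn hΩ.measurableSet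
      ((hu.continuousOn_norm_gradient_rpow hΩ (by linarith)).mul
        ((hu.continuousOn_gradient hΩ).inner hg2.1.continuous_gradient.continuousOn))
      fun x hx => by_contra fun h => hx (by simp [gradient_eq_zero_of_notMem_tsupport h]))
    hΩ.measurableSet fun x hx => ?_
  rw [((hasGradientAt_exp_mul_mul hΩ hu hη.1 t hx).pow 2).gradient]
  set g := exp (t * u x) * η x
  have hinner : -(g * ⟪∇ u x, ∇ η x⟫_ℝ) ≤ |g| * (‖∇ u x‖ * ‖∇ η x‖) :=
    (neg_le_abs _).trans (by
      rw [abs_mul]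
      exact mul_le_mul_of_nonneg_left (abs_real_inner_le_norm _ _) (abs_nonneg _))
  have hyoung := two_mul_le_mul_sq_add_inv_mul_sq hδ (|g| * ‖∇ u x‖) (exp (t * u x) * ‖∇ η x‖)
  rw [mul_pow |g|, sq_abs] at hyoung
  have hcross : 0 ≤ 2 * g * exp (t * u x) * ⟪∇ u x, ∇ η x⟫_ℝ + δ * (‖∇ u x‖ * g) ^ 2 +
      δ⁻¹ * (exp (t * u x) * ‖∇ η x‖) ^ 2 := by
    nlinarith [mul_le_mul_of_nonneg_left hinner (exp_pos (t * u x)).le]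
  have hw : 0 ≤ ‖∇ u x‖ ^ (p - 2) := by positivity
  norm_num only [inner_add_right, inner_smul_right, real_inner_self_eq_norm_sq]
  nlinarith [mul_nonneg hw hcross]

end Gelfand

theorem exists_caccioppoli_gelfand {p t : ℝ} (hp : 2 ≤ p) (ht : 0 < t) (ht2 : t < 2 / (p - 1)) :
    ∃ C > 0, ∀ {F : Type*} [NormedAddCommGroup F] [InnerProductSpace ℝ F] [CompleteSpace F]
      [MeasurableSpace F] [OpensMeasurableSpace F] (μ : Measure F) [IsFiniteMeasureOnCompacts μ]
      {Ω : Set F} {f u η : F → ℝ}, IsOpen Ω → ContDiffOn ℝ 1 u Ω →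
      IsGelfandWeakSolution p μ Ω f u → IsGelfandStable p μ Ω f u → IsTestFunction Ω η →
      ∫ x in Ω, f x * exp (u x) * (exp (t * u x) * η x) ^ 2 ∂μ ≤
        C * ∫ x in Ω, ‖∇ u x‖ ^ (p - 2) * (exp (t * u x) * ‖∇ η x‖) ^ 2 ∂μ := by
  have hp1 : 0 < p - 1 := by linarith
  have hs : (p - 1) * t < 2 := by rw [mul_comm]; exact (lt_div_iff₀ hp1).1 ht2
  obtain ⟨ε, δ, hε, hδ, hεδ⟩ := exists_pos_mul_one_add_mul_sq_lt hp1 ht hs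
  have ha : 0 ≤ (p - 1) * (1 + ε) * t ^ 2 := by positivity
  refine ⟨((p - 1) * (1 + ε) * t ^ 2 * δ⁻¹ + (p - 1) * (1 + ε⁻¹) * (2 * t - δ)) /
      (2 * t - δ - (p - 1) * (1 + ε) * t ^ 2),
    div_pos (add_pos_of_nonneg_of_pos (by positivity) (mul_pos (by positivity)
      (ha.trans_lt hεδ))) (by linarith), ?_⟩
  intro F _ _ _ _ _ μ _ Ω f u η hΩ hu hweak hstab hη
  have hw := hu.continuousOn_norm_gradient_rpow hΩ (q := p - 2) (by linarith)
  have hJ : IntegrableOn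
      (fun x => ‖∇ u x‖ ^ (p - 2) * (‖∇ u x‖ * (exp (t * u x) * η x)) ^ 2) Ω μ :=
    hη.integrableOn hΩ.measurableSet
      (hw.mul ((((hu.continuousOn_gradient hΩ).norm).mul
        ((continuousOn_const.mul hu.continuousOn).rexp.mul hη.1.continuous.continuousOn)).pow 2))
      fun x hx => by_contra fun h => hx (by simp [image_eq_zero_of_notMem_tsupport h])
  have hV : IntegrableOn (fun x => ‖∇ u x‖ ^ (p - 2) * (exp (t * u x) * ‖∇ η x‖) ^ 2) Ω μ :=
    hη.integrableOn hΩ.measurableSet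
      (hw.mul (((continuousOn_const.mul hu.continuousOn).rexp.mul
        hη.1.continuous_gradient.norm.continuousOn).pow 2))
      fun x hx => by_contra fun h => hx (by simp [gradient_eq_zero_of_notMem_tsupport h])
  exact le_div_mul_of_le_add_of_le_add ha hεδ
    ((hstab.integral_le (by linarith) hΩ hu hη hε hJ hV).trans_eq (by ring))
    (sub_le_iff_le_add.1 (hweak.le_integral hp hΩ hu hη hδ hJ hV))

theorem mul_le_mul_add_mul_div_rpow {a c q s Z : ℝ} (ha : 0 ≤ a) (hc : 0 < c) (hq : 0 ≤ q)
    (hs : 0 ≤ s) (hZ0 : 0 ≤ Z) (hZ : Z ≤ q ^ s) : a * Z ≤ c * q * Z + a * (a / c) ^ s := by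
  rcases le_or_gt a (c * q) with hac | hac
  · nlinarith [mul_le_mul_of_nonneg_right hac hZ0,
      mul_nonneg ha (rpow_nonneg (div_nonneg ha hc.le) s)]
  · have hqs : q ^ s ≤ (a / c) ^ s := rpow_le_rpow hq ((le_div_iff₀ hc).2 (by linarith)) hs
    nlinarith [mul_le_mul_of_nonneg_left hZ (sub_nonneg.2 hac.le),
      mul_le_mul_of_nonneg_left hqs (sub_nonneg.2 hac.le),
      mul_nonneg (mul_nonneg hc.le hq) (rpow_nonneg hq s)]

theorem sq_exp_mul_mul_pow_le_rpow {v φ t : ℝ} {k : ℕ} (hφ0 : 0 ≤ φ) (hφ1 : φ ≤ 1) (ht : 0 ≤ t)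
    (hk : 2 * t ≤ k) : (exp (t * v) * φ ^ k) ^ 2 ≤ (exp v * φ ^ 2) ^ (2 * t) := by
  have he : exp (t * v) ^ 2 = exp v ^ (2 * t) := by
    rw [← exp_mul, sq, ← exp_add]
    ring_nf
  calc (exp (t * v) * φ ^ k) ^ 2 = exp v ^ (2 * t) * (φ ^ 2) ^ (k : ℝ) := by
        rw [rpow_natCast, mul_pow, he, ← pow_mul, ← pow_mul]
        ring
    _ ≤ exp v ^ (2 * t) * (φ ^ 2) ^ (2 * t) :=
        mul_le_mul_of_nonneg_left (rpow_le_rpow_of_exponent_ge' (sq_nonneg _)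
          (pow_le_one₀ hφ0 hφ1) (by positivity) hk) (by positivity)
    _ = (exp v * φ ^ 2) ^ (2 * t) := (mul_rpow (exp_pos _).le (sq_nonneg _)).symm

theorem ofReal_mul_le_young {a f q s K Z : ℝ} (ha : 0 ≤ a) (hf : 0 ≤ f) (hq : 0 ≤ q) (hs : 0 < s)
    (hK : 0 < K) (hZ0 : 0 ≤ Z) (hZ : Z ≤ q ^ s) :
    ENNReal.ofReal (a * Z) ≤ ENNReal.ofReal (f * q * Z / K) +
      ENNReal.ofReal (K ^ s) * (ENNReal.ofReal f ^ (-s) * ENNReal.ofReal (a ^ (s + 1))) := by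
  rcases hf.eq_or_lt with rfl | hf
  · rcases ha.eq_or_lt with rfl | ha
    · simp
    · simp only [ENNReal.ofReal_zero, ENNReal.zero_rpow_of_neg (neg_neg_of_pos hs)]
      rw [ENNReal.top_mul (ENNReal.ofReal_pos.2 (rpow_pos_of_pos ha _)).ne',
        ENNReal.mul_top (ENNReal.ofReal_pos.2 (rpow_pos_of_pos hK _)).ne']
      exact le_top
  calc ENNReal.ofReal (a * Z)
      ≤ ENNReal.ofReal (f * q * Z / K + K ^ s * (f ^ (-s) * a ^ (s + 1))) := by
        refine ENNReal.ofReal_le_ofReal ((mul_le_mul_add_mul_div_rpow ha (div_pos hf hK) hq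
          hs.le hZ0 hZ).trans_eq ?_)
        rw [div_div_eq_mul_div, mul_div_assoc, mul_rpow ha (by positivity),
          div_rpow hK.le hf.le, rpow_neg hf.le, rpow_add_one' ha (by linarith)]
        field_simp
    _ ≤ _ := by
        rw [ENNReal.ofReal_add (by positivity) (by positivity), ENNReal.ofReal_mul (by positivity),
          ENNReal.ofReal_mul (by positivity), ENNReal.ofReal_rpow_of_pos hf]

theorem lintegral_le_of_integral_le_mul {α : Type*} [MeasurableSpace α] {μ : Measure α}
    {s : Set α} (hs : MeasurableSet s) {g h : α → ℝ} {b : α → ℝ≥0∞} {C : ℝ} (hC : 0 < C)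
    (hg : IntegrableOn g s μ) (hg0 : ∀ x ∈ s, 0 ≤ g x) (hh : IntegrableOn h s μ)
    (hh0 : ∀ x ∈ s, 0 ≤ h x) (hgh : ∫ x in s, g x ∂μ ≤ C * ∫ x in s, h x ∂μ)
    (hb : ∀ x ∈ s, ENNReal.ofReal (h x) ≤ ENNReal.ofReal (g x / (2 * C)) + b x) :
    ∫⁻ x in s, ENNReal.ofReal (g x) ∂μ ≤ ENNReal.ofReal (2 * C) * ∫⁻ x in s, b x ∂μ := by
  set G := ∫⁻ x in s, ENNReal.ofReal (g x) ∂μ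
  set B := ∫⁻ x in s, b x ∂μ
  have hG : ENNReal.ofReal (∫ x in s, g x ∂μ) = G :=
    ofReal_integral_eq_lintegral_ofReal hg (ae_restrict_of_forall_mem hs hg0)
  have hH : ∫⁻ x in s, ENNReal.ofReal (h x) ∂μ ≤ ENNReal.ofReal ((2 * C)⁻¹) * G + B :=
    calc ∫⁻ x in s, ENNReal.ofReal (h x) ∂μ
        ≤ ∫⁻ x in s, (ENNReal.ofReal ((2 * C)⁻¹) * ENNReal.ofReal (g x) + b x) ∂μ := by
          refine setLIntegral_mono' hs fun x hx => (hb x hx).trans_eq ?_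
          rw [div_eq_inv_mul, ENNReal.ofReal_mul (by positivity)]
      _ = _ := by
          rw [lintegral_add_left' (hg.aemeasurable.ennreal_ofReal.const_mul _),
            lintegral_const_mul' _ _ ENNReal.ofReal_ne_top]
  have hhalf : G / 2 + G / 2 ≤ G / 2 + ENNReal.ofReal C * B :=
    calc G / 2 + G / 2 = G := ENNReal.add_halves G
      _ ≤ ENNReal.ofReal C * ∫⁻ x in s, ENNReal.ofReal (h x) ∂μ := by
          rw [← hG, ← ofReal_integral_eq_lintegral_ofReal hh (ae_restrict_of_forall_mem hs hh0),
            ← ENNReal.ofReal_mul hC.le]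
          exact ENNReal.ofReal_le_ofReal hgh
      _ ≤ ENNReal.ofReal C * (ENNReal.ofReal ((2 * C)⁻¹) * G + B) := by gcongr
      _ = G / 2 + ENNReal.ofReal C * B := by
          rw [mul_add, ← mul_assoc, ← ENNReal.ofReal_mul hC.le,
            show C * (2 * C)⁻¹ = 2⁻¹ by field_simp, ENNReal.ofReal_inv_of_pos two_pos,
            ENNReal.ofReal_ofNat, ← ENNReal.div_eq_inv_mul]
  calc G = 2 * (G / 2) := (ENNReal.mul_div_cancel two_ne_zero ENNReal.ofNat_ne_top).symm
    _ ≤ 2 * (ENNReal.ofReal C * B) := by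
        gcongr
        exact (ENNReal.add_le_add_iff_left (ENNReal.div_ne_top (hG ▸ ENNReal.ofReal_ne_top)
          two_ne_zero)).1 hhalf
    _ = ENNReal.ofReal (2 * C) * B := by
        rw [ENNReal.ofReal_mul zero_le_two, ENNReal.ofReal_ofNat, mul_assoc]

theorem lintegral_gelfand_le_of_integral_le {α : Type*} [MeasurableSpace α] {μ : Measure α}
    {s : Set α} (hs : MeasurableSet s) {f u φ a : α → ℝ} {t C : ℝ} {m : ℕ}
    (hf0 : ∀ x ∈ s, 0 ≤ f x) (ha : ∀ x, 0 ≤ a x) (hφ0 : ∀ x, 0 ≤ φ x) (hφ1 : ∀ x, φ x ≤ 1)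
    (ht : 0 < t) (hm : 2 * t + 1 ≤ m) (hC : 0 < C)
    (hg : IntegrableOn (fun x => f x * exp (u x) * (exp (t * u x) * φ x ^ m) ^ 2) s μ)
    (hh : IntegrableOn (fun x => a x * (exp (t * u x) * φ x ^ (m - 1)) ^ 2) s μ)
    (hI : ∫ x in s, f x * exp (u x) * (exp (t * u x) * φ x ^ m) ^ 2 ∂μ ≤
      C * ∫ x in s, a x * (exp (t * u x) * φ x ^ (m - 1)) ^ 2 ∂μ) :
    ∫⁻ x in s, ENNReal.ofReal (f x * exp ((2 * t + 1) * u x) * φ x ^ (2 * (m : ℝ))) ∂μ ≤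
      ENNReal.ofReal ((2 * C) ^ (2 * t + 1)) *
        ∫⁻ x in s, ENNReal.ofReal (f x) ^ (-(2 * t)) * ENNReal.ofReal (a x ^ (2 * t + 1)) ∂μ := by
  have hm1 : 1 ≤ m := by exact_mod_cast (show (1 : ℝ) ≤ m by linarith)
  have hyoung : ∀ x ∈ s, ENNReal.ofReal (a x * (exp (t * u x) * φ x ^ (m - 1)) ^ 2) ≤
      ENNReal.ofReal (f x * exp (u x) * (exp (t * u x) * φ x ^ m) ^ 2 / (2 * C)) +
        ENNReal.ofReal ((2 * C) ^ (2 * t)) *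
          (ENNReal.ofReal (f x) ^ (-(2 * t)) * ENNReal.ofReal (a x ^ (2 * t + 1))) := by
    intro x hx
    have hZ := sq_exp_mul_mul_pow_le_rpow (v := u x) (hφ0 x) (hφ1 x) ht.le
      (k := m - 1) (by rw [Nat.cast_sub hm1]; push_cast; linarith)
    refine (ofReal_mul_le_young (K := 2 * C) (ha x) (hf0 x hx) (by positivity) (by positivity)
      (by positivity) (by positivity) hZ).trans_eq ?_
    have hφm : φ x ^ m = φ x ^ (m - 1) * φ x := by rw [← pow_succ, Nat.sub_add_cancel hm1]
    rw [hφm]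
    ring_nf
  calc ∫⁻ x in s, ENNReal.ofReal (f x * exp ((2 * t + 1) * u x) * φ x ^ (2 * (m : ℝ))) ∂μ
      = ∫⁻ x in s, ENNReal.ofReal (f x * exp (u x) * (exp (t * u x) * φ x ^ m) ^ 2) ∂μ := by
        refine lintegral_congr fun x => congrArg ENNReal.ofReal ?_
        have he : exp ((2 * t + 1) * u x) = exp (u x) * exp (t * u x) ^ 2 := by
          rw [sq, ← exp_add, ← exp_add]
          ring_nf
        rw [show 2 * (m : ℝ) = ((2 * m : ℕ) : ℝ) by push_cast; ring, rpow_natCast, he]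
        ring
    _ ≤ _ := lintegral_le_of_integral_le_mul hs hC hg
          (fun x hx => by have := hf0 x hx; positivity) hh (fun x _ => by have := ha x; positivity)
          hI hyoung
    _ = _ := by
        rw [lintegral_const_mul' _ _ ENNReal.ofReal_ne_top, ← mul_assoc,
          ← ENNReal.ofReal_mul (by positivity), rpow_add_one (by positivity),
          mul_comm ((2 * C) ^ (2 * t))]

theorem lintegral_gelfand_le_of_caccioppoli {F : Type*} [NormedAddCommGroup F]
    [InnerProductSpace ℝ F] [CompleteSpace F] [MeasurableSpace F] [OpensMeasurableSpace F]
    {μ : Measure F} [IsFiniteMeasureOnCompacts μ] {Ω : Set F} {f u φ : F → ℝ} {p t C : ℝ}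
    {m : ℕ} (hΩ : IsOpen Ω) (hf : ContinuousOn f Ω) (hf0 : ∀ x ∈ Ω, 0 ≤ f x)
    (hu : ContDiffOn ℝ 1 u Ω) (hp : 2 ≤ p) (hφ : IsTestFunction Ω φ) (hφ0 : ∀ x, 0 ≤ φ x)
    (hφ1 : ∀ x, φ x ≤ 1) (ht : 0 < t) (hm : 2 * t + 1 ≤ m) (hC : 0 < C)
    (hI : ∫ x in Ω, f x * exp (u x) * (exp (t * u x) * φ x ^ m) ^ 2 ∂μ ≤
      C * ∫ x in Ω, ‖∇ u x‖ ^ (p - 2) * (exp (t * u x) * ‖∇ (fun y => φ y ^ m) x‖) ^ 2 ∂μ) :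
    ∫⁻ x in Ω, ENNReal.ofReal (f x * exp ((2 * t + 1) * u x) * φ x ^ (2 * (m : ℝ))) ∂μ ≤
      ENNReal.ofReal ((2 * (m ^ 2 * C)) ^ (2 * t + 1)) *
        ∫⁻ x in Ω, ENNReal.ofReal (f x) ^ (-(2 * t)) *
          ENNReal.ofReal ((‖∇ u x‖ ^ (p - 2) * ‖∇ φ x‖ ^ 2) ^ (2 * t + 1)) ∂μ := by
  have hm0 : m ≠ 0 := by rintro rfl; norm_num at hm; linarith
  have hexp : ContinuousOn (fun x => exp (t * u x)) Ω :=
    ((continuousOn_const (c := t)).mul hu.continuousOn).rexp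
  refine lintegral_gelfand_le_of_integral_le hΩ.measurableSet hf0 (fun x => by positivity) hφ0
    hφ1 ht hm (by positivity)
    (hφ.integrableOn hΩ.measurableSet ((hf.mul hu.continuousOn.rexp).mul
        ((hexp.mul (hφ.1.continuous.continuousOn.pow m)).pow 2))
      fun x hx => by_contra fun h => hx (by simp [image_eq_zero_of_notMem_tsupport h, hm0]))
    (hφ.integrableOn hΩ.measurableSet
      (((hu.continuousOn_norm_gradient_rpow hΩ (by linarith)).mul
        (hφ.1.continuous_gradient.norm.continuousOn.pow 2)).mul
        ((hexp.mul (hφ.1.continuous.continuousOn.pow _)).pow 2))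
      fun x hx => by_contra fun h => hx (by simp [gradient_eq_zero_of_notMem_tsupport h]))
    (hI.trans_eq ?_)
  rw [mul_comm ((m : ℝ) ^ 2) C, mul_assoc, ← integral_const_mul ((m : ℝ) ^ 2)]
  refine congrArg (C * ·) (setIntegral_congr_fun hΩ.measurableSet fun x _ => ?_)
  have hgrad : HasGradientAt φ (∇ φ x) x := (hφ.1.differentiable one_ne_zero x).hasGradientAt
  rw [(hgrad.pow m).gradient, norm_smul, Real.norm_of_nonneg (by have := hφ0 x; positivity)]
  ring

/-- **Statement 14.** Moser-iteration estimate (Gelfand nonlinearity, exponent `2m`) for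
stable weak solutions of `-Δ_p u = f(x) e^u`:
`∫_Ω f e^{(2t+1)u} φ^{2m} ≤ C ∫_Ω f^{-2t} (|∇u|^{p-2}|∇φ|²)^{2t+1}` for `0 < t < 2/(p-1)`,
with `C` independent of `Ω`, `f` and `u`; both sides are `[0,∞]`-valued integrals. -/
theorem moser_estimate_gelfand_2m
    (p t : ℝ) (hp : 2 ≤ p) (ht1 : 0 < t) (ht2 : t < 2 / (p - 1)) :
    ∃ m₀ : ℕ, 1 ≤ m₀ ∧ ∀ m : ℕ, m₀ ≤ m → ∃ C : ℝ, 0 < C ∧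
      ∀ (n : ℕ), 1 ≤ n →
      ∀ Ω : Set (EuclideanSpace ℝ (Fin n)), IsOpen Ω →
      ∀ f : EuclideanSpace ℝ (Fin n) → ℝ, ContinuousOn f Ω → (∀ x ∈ Ω, 0 ≤ f x) →
      ∀ u : EuclideanSpace ℝ (Fin n) → ℝ, ContDiffOn ℝ 1 u Ω →
      (∀ φ : EuclideanSpace ℝ (Fin n) → ℝ, ContDiff ℝ 1 φ → HasCompactSupport φ →
        tsupport φ ⊆ Ω →
        (∫ x in Ω, ‖gradient u x‖ ^ (p - 2) * (inner ℝ (gradient u x) (gradient φ x) : ℝ)) =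
          ∫ x in Ω, f x * Real.exp (u x) * φ x) →
      (∀ φ : EuclideanSpace ℝ (Fin n) → ℝ, ContDiff ℝ 1 φ → HasCompactSupport φ →
        tsupport φ ⊆ Ω →
        (∫ x in Ω, f x * Real.exp (u x) * φ x ^ 2) ≤
          (p - 1) * ∫ x in Ω, ‖gradient u x‖ ^ (p - 2) * ‖gradient φ x‖ ^ 2) →
      ∀ φ : EuclideanSpace ℝ (Fin n) → ℝ, ContDiff ℝ 1 φ → HasCompactSupport φ →
        tsupport φ ⊆ Ω → (∀ x, 0 ≤ φ x) → (∀ x, φ x ≤ 1) →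
        (∫⁻ x in Ω, ENNReal.ofReal
            (f x * Real.exp ((2 * t + 1) * u x) * φ x ^ (2 * (m : ℝ)))) ≤
          ENNReal.ofReal C *
            ∫⁻ x in Ω, ENNReal.ofReal (f x) ^ (-(2 * t)) *
              ENNReal.ofReal
                ((‖gradient u x‖ ^ (p - 2) * ‖gradient φ x‖ ^ 2) ^ (2 * t + 1)) := by
  obtain ⟨C, hC, hcacc⟩ := exists_caccioppoli_gelfand hp ht1 ht2
  refine ⟨⌈2 * t⌉₊ + 1, le_add_self, fun m hm => ?_⟩
  have hm' : 2 * t + 1 ≤ m := by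
    have : ((⌈2 * t⌉₊ + 1 : ℕ) : ℝ) ≤ m := by exact_mod_cast hm
    push_cast at this
    linarith [Nat.le_ceil (2 * t)]
  have hm0 : (0 : ℝ) < m := by linarith
  refine ⟨(2 * (m ^ 2 * C)) ^ (2 * t + 1), by positivity,
    fun n _ Ω hΩ f hf hf0 u hu hweak hstab φ hφ hφc hφΩ hφ0 hφ1 => ?_⟩
  have hφ' : IsTestFunction Ω φ := ⟨hφ, hφc, hφΩ⟩
  exact lintegral_gelfand_le_of_caccioppoli hΩ hf hf0 hu hp hφ' hφ0 hφ1 ht1 hm' hC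
    (hcacc volume hΩ hu (fun ψ hψ => hweak ψ hψ.1 hψ.2.1 hψ.2.2)
      (fun ψ hψ => hstab ψ hψ.1 hψ.2.1 hψ.2.2) (hφ'.pow (by omega)))
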